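/- arXiv:1302.4778 — 7 statements merged into one kernel-verified Lean document; each statement's English description precedes it below -/
import Mathlib

section
/- Assume in addition that h(x,λ) = (h₁(x,λ), λ) is a bijection of ℝ^n × ℝ^p, that H(y,λ) = (H₁(y,λ), λ) is injective on ℝ^p × ℝ^p, and that the map λ ↦ H₁(0,λ) is surjective onto ℝ^p. Then the map (x,λ) ↦ (h₁(x,λ), H₁(0,λ)) maps the set F⁻¹(0) = {(x,λ) : F(x,λ) = 0} onto the graph of f, i.e. its image of F⁻¹(0) equals {(u, f(u)) : u ∈ ℝ^n}. (Global version of Lemma 3.2.) -/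
/-- Matrix-vector multiplication, viewed as a map on Euclidean spaces. -/
noncomputable def mulVecE {p q : ℕ} (A : Matrix (Fin p) (Fin q) ℝ)
    (v : EuclideanSpace ℝ (Fin q)) : EuclideanSpace ℝ (Fin p) :=
  (WithLp.equiv 2 (Fin p → ℝ)).symm (A.mulVec (WithLp.equiv 2 (Fin q → ℝ) v))

/-- Lemma 3.2 (global version): if `h(x,λ) = (h₁(x,λ),λ)` is a bijection,
`H(y,λ) = (H₁(y,λ),λ)` is injective, and `λ ↦ H₁(0,λ)` is surjective, then
`(x,λ) ↦ (h₁(x,λ), H₁(0,λ))` maps the zero set of `F` onto the graph of `f`. -/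
theorem lemma_3_2 (n p : ℕ) (hn : 0 < n) (hp : 0 < p)
    (f g : EuclideanSpace ℝ (Fin n) → EuclideanSpace ℝ (Fin p))
    (s : EuclideanSpace ℝ (Fin n) → EuclideanSpace ℝ (Fin n))
    (M : EuclideanSpace ℝ (Fin n) → Matrix (Fin p) (Fin p) ℝ)
    (hM : ∀ x, IsUnit (M x))
    (hfg : ∀ x, f x = mulVecE (M x) (g (s x)))
    (F : EuclideanSpace ℝ (Fin n) → EuclideanSpace ℝ (Fin p) → EuclideanSpace ℝ (Fin p))
    (hF : ∀ x lam, F x lam = f x - mulVecE (M x) lam)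
    (h₁ : EuclideanSpace ℝ (Fin n) × EuclideanSpace ℝ (Fin p) → EuclideanSpace ℝ (Fin n))
    (H₁ : EuclideanSpace ℝ (Fin p) × EuclideanSpace ℝ (Fin p) → EuclideanSpace ℝ (Fin p))
    (hcomm : ∀ x lam, f (h₁ (x, lam)) = H₁ (F x lam, lam))
    (hh : Function.Bijective
      (fun q : EuclideanSpace ℝ (Fin n) × EuclideanSpace ℝ (Fin p) => (h₁ q, q.2)))
    (hH : Function.Injective
      (fun q : EuclideanSpace ℝ (Fin p) × EuclideanSpace ℝ (Fin p) => (H₁ q, q.2)))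
    (hsurj : Function.Surjective (fun lam : EuclideanSpace ℝ (Fin p) => H₁ (0, lam))) :
    (fun q : EuclideanSpace ℝ (Fin n) × EuclideanSpace ℝ (Fin p) =>
        (h₁ q, H₁ (0, q.2))) ''
      {q : EuclideanSpace ℝ (Fin n) × EuclideanSpace ℝ (Fin p) | F q.1 q.2 = 0}
      = {z : EuclideanSpace ℝ (Fin n) × EuclideanSpace ℝ (Fin p) | z.2 = f z.1} := by
  ext z
  constructor
  · rintro ⟨⟨x, lam⟩, hz, rfl⟩
    simp only [Set.mem_setOf_eq] at hz ⊢
    rw [hcomm x lam, hz]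
  · intro hz
    obtain ⟨lam, hlam⟩ := hsurj (f z.1)
    obtain ⟨q, hq⟩ := hh.2 (z.1, lam)
    have hq1 : h₁ q = z.1 := congrArg Prod.fst hq
    have hq2 : q.2 = lam := congrArg Prod.snd hq
    simp only at hlam
    simp only [Set.mem_setOf_eq] at hz
    have hF0 : F q.1 q.2 = 0 := by
      have key : H₁ (F q.1 q.2, q.2) = H₁ (0, q.2) := by
        have := hcomm q.1 q.2
        rw [show ((q.1 : EuclideanSpace ℝ (Fin n)), q.2) = q from rfl] at this
        rw [← this, hq1, hq2, hlam]
      have := hH (a₁ := (F q.1 q.2, q.2)) (a₂ := (0, q.2)) (by simp [key])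
      exact congrArg Prod.fst this
    refine ⟨q, hF0, ?_⟩
    show (h₁ q, H₁ (0, q.2)) = z
    rw [hq1, hq2, hlam, ← hz]
end

section
/- Assume in addition that h(x,λ) = (h₁(x,λ), λ) is a bijection of ℝ^n × ℝ^p that is bi-Lipschitz, and that λ ↦ H₁(0,λ) is a bi-Lipschitz bijection of ℝ^p. Then the restriction of the map (x,λ) ↦ (h₁(x,λ), H₁(0,λ)) to the set F⁻¹(0) = {(x,λ) : F(x,λ) = 0} is bi-Lipschitz onto its image, and this image is contained in the graph of f, {(u, f(u)) : u ∈ ℝ^n}. (The step establishing the set (6) in the proof of Lemma 3.3.) -/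
/-- The step establishing set (6) in the proof of Lemma 3.3: if
`h(x,λ) = (h₁(x,λ),λ)` is a bi-Lipschitz bijection and `λ ↦ H₁(0,λ)` is a
bi-Lipschitz bijection of `ℝ^p`, then the restriction of
`(x,λ) ↦ (h₁(x,λ), H₁(0,λ))` to the zero set of `F` is bi-Lipschitz onto its
image, and this image is contained in the graph of `f`. -/
theorem biLipschitz_onto_graph (n p : ℕ) (hn : 0 < n) (hp : 0 < p)
    (f g : EuclideanSpace ℝ (Fin n) → EuclideanSpace ℝ (Fin p))
    (s : EuclideanSpace ℝ (Fin n) → EuclideanSpace ℝ (Fin n))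
    (M : EuclideanSpace ℝ (Fin n) → Matrix (Fin p) (Fin p) ℝ)
    (hM : ∀ x, IsUnit (M x))
    (hfg : ∀ x, f x = mulVecE (M x) (g (s x)))
    (F : EuclideanSpace ℝ (Fin n) → EuclideanSpace ℝ (Fin p) → EuclideanSpace ℝ (Fin p))
    (hF : ∀ x lam, F x lam = f x - mulVecE (M x) lam)
    (h₁ : EuclideanSpace ℝ (Fin n) × EuclideanSpace ℝ (Fin p) → EuclideanSpace ℝ (Fin n))
    (H₁ : EuclideanSpace ℝ (Fin p) × EuclideanSpace ℝ (Fin p) → EuclideanSpace ℝ (Fin p))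
    (hcomm : ∀ x lam, f (h₁ (x, lam)) = H₁ (F x lam, lam))
    (hhbij : Function.Bijective
      (fun q : EuclideanSpace ℝ (Fin n) × EuclideanSpace ℝ (Fin p) => (h₁ q, q.2)))
    (hhbiLip : ∃ c C : ℝ, 0 < c ∧ 0 < C ∧
      ∀ q q' : EuclideanSpace ℝ (Fin n) × EuclideanSpace ℝ (Fin p),
        c * ‖q - q'‖ ≤ ‖(h₁ q, q.2) - (h₁ q', q'.2)‖ ∧
        ‖(h₁ q, q.2) - (h₁ q', q'.2)‖ ≤ C * ‖q - q'‖)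
    (hH₁bij : Function.Bijective (fun lam : EuclideanSpace ℝ (Fin p) => H₁ (0, lam)))
    (hH₁biLip : ∃ c C : ℝ, 0 < c ∧ 0 < C ∧
      ∀ lam lam' : EuclideanSpace ℝ (Fin p),
        c * ‖lam - lam'‖ ≤ ‖H₁ (0, lam) - H₁ (0, lam')‖ ∧
        ‖H₁ (0, lam) - H₁ (0, lam')‖ ≤ C * ‖lam - lam'‖) :
    (∃ c C : ℝ, 0 < c ∧ 0 < C ∧
      ∀ q ∈ {q : EuclideanSpace ℝ (Fin n) × EuclideanSpace ℝ (Fin p) | F q.1 q.2 = 0},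
      ∀ q' ∈ {q : EuclideanSpace ℝ (Fin n) × EuclideanSpace ℝ (Fin p) | F q.1 q.2 = 0},
        c * ‖q - q'‖ ≤ ‖(h₁ q, H₁ (0, q.2)) - (h₁ q', H₁ (0, q'.2))‖ ∧
        ‖(h₁ q, H₁ (0, q.2)) - (h₁ q', H₁ (0, q'.2))‖ ≤ C * ‖q - q'‖) ∧
    (fun q : EuclideanSpace ℝ (Fin n) × EuclideanSpace ℝ (Fin p) =>
        (h₁ q, H₁ (0, q.2))) ''
      {q : EuclideanSpace ℝ (Fin n) × EuclideanSpace ℝ (Fin p) | F q.1 q.2 = 0}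
      ⊆ {z : EuclideanSpace ℝ (Fin n) × EuclideanSpace ℝ (Fin p) | z.2 = f z.1} := by
  obtain ⟨c₁, C₁, hc₁, hC₁, hh⟩ := hhbiLip
  obtain ⟨c₂, C₂, hc₂, hC₂, hH⟩ := hH₁biLip
  constructor
  · refine ⟨c₁ * min 1 c₂, max C₁ C₂, by positivity, lt_max_of_lt_left hC₁, ?_⟩
    intro q hq q' hq'
    have h1 := (hh q q').1
    have h1' := (hh q q').2
    have h2 := (hH q.2 q'.2).1
    have h2' := (hH q.2 q'.2).2
    have e1 : ‖(h₁ q, q.2) - (h₁ q', q'.2)‖ = max ‖h₁ q - h₁ q'‖ ‖q.2 - q'.2‖ := by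
      rw [Prod.mk_sub_mk, Prod.norm_def]
    have e2 : ‖(h₁ q, H₁ (0, q.2)) - (h₁ q', H₁ (0, q'.2))‖
        = max ‖h₁ q - h₁ q'‖ ‖H₁ (0, q.2) - H₁ (0, q'.2)‖ := by
      rw [Prod.mk_sub_mk, Prod.norm_def]
    rw [e1] at h1 h1'
    rw [e2]
    have hmn : ‖q.2 - q'.2‖ ≤ ‖q - q'‖ := by
      have := norm_snd_le (q - q')
      simpa using this
    constructor
    · rcases le_total ‖q.2 - q'.2‖ ‖h₁ q - h₁ q'‖ with hc | hc
      · have he : max ‖h₁ q - h₁ q'‖ ‖q.2 - q'.2‖ = ‖h₁ q - h₁ q'‖ := max_eq_left hc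
        rw [he] at h1
        calc c₁ * min 1 c₂ * ‖q - q'‖ ≤ 1 * (c₁ * ‖q - q'‖) := by
              have hm1 : min 1 c₂ ≤ 1 := min_le_left _ _
              nlinarith [mul_nonneg hc₁.le (norm_nonneg (q - q'))]
          _ ≤ ‖h₁ q - h₁ q'‖ := by linarith
          _ ≤ _ := le_max_left _ _
      · have he : max ‖h₁ q - h₁ q'‖ ‖q.2 - q'.2‖ = ‖q.2 - q'.2‖ := max_eq_right hc
        rw [he] at h1
        calc c₁ * min 1 c₂ * ‖q - q'‖ ≤ c₂ * (c₁ * ‖q - q'‖) := by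
              have hm1 : min 1 c₂ ≤ c₂ := min_le_right _ _
              nlinarith [mul_nonneg hc₁.le (norm_nonneg (q - q'))]
          _ ≤ c₂ * ‖q.2 - q'.2‖ := by nlinarith
          _ ≤ ‖H₁ (0, q.2) - H₁ (0, q'.2)‖ := h2
          _ ≤ _ := le_max_right _ _
    · apply max_le
      · calc ‖h₁ q - h₁ q'‖ ≤ max ‖h₁ q - h₁ q'‖ ‖q.2 - q'.2‖ := le_max_left _ _
          _ ≤ C₁ * ‖q - q'‖ := h1'
          _ ≤ max C₁ C₂ * ‖q - q'‖ := by
              have := le_max_left C₁ C₂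
              nlinarith [norm_nonneg (q - q')]
      · calc ‖H₁ (0, q.2) - H₁ (0, q'.2)‖ ≤ C₂ * ‖q.2 - q'.2‖ := h2'
          _ ≤ max C₁ C₂ * ‖q - q'‖ := by
              have h3 := le_max_right C₁ C₂
              nlinarith [norm_nonneg (q - q'), norm_nonneg (q.2 - q'.2)]
  · rintro z ⟨q, hq, rfl⟩
    have hco := hcomm q.1 q.2
    simp only [Set.mem_setOf_eq] at hq ⊢
    rw [hq] at hco
    simpa using hco.symm
end

section
/- Assume in addition: f is Lipschitz, the map x ↦ g(s(x)) is Lipschitz, h(x,λ) = (h₁(x,λ), λ) is a bi-Lipschitz bijection of ℝ^n × ℝ^p, and λ ↦ H₁(0,λ) is a bi-Lipschitz bijection of ℝ^p. Then the map ℝ^n → ℝ^n given by x ↦ h₁(x, g(s(x))) is bi-Lipschitz: there exist constants c, C > 0 such that c‖x − x'‖ ≤ ‖h₁(x, g(s(x))) − h₁(x', g(s(x')))‖ ≤ C‖x − x'‖ for all x, x' ∈ ℝ^n. (Global version of Lemma 3.3.) -/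
/-- Lemma 3.3 (global version): if `f` and `x ↦ g(s x)` are Lipschitz,
`h(x,λ) = (h₁(x,λ),λ)` is a bi-Lipschitz bijection of `ℝ^n × ℝ^p` and
`λ ↦ H₁(0,λ)` is a bi-Lipschitz bijection of `ℝ^p`, then
`x ↦ h₁(x, g(s x))` is bi-Lipschitz. -/
theorem lemma_3_3 (n p : ℕ) (hn : 0 < n) (hp : 0 < p)
    (f g : EuclideanSpace ℝ (Fin n) → EuclideanSpace ℝ (Fin p))
    (s : EuclideanSpace ℝ (Fin n) → EuclideanSpace ℝ (Fin n))
    (M : EuclideanSpace ℝ (Fin n) → Matrix (Fin p) (Fin p) ℝ)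
    (hM : ∀ x, IsUnit (M x))
    (hfg : ∀ x, f x = mulVecE (M x) (g (s x)))
    (F : EuclideanSpace ℝ (Fin n) → EuclideanSpace ℝ (Fin p) → EuclideanSpace ℝ (Fin p))
    (hF : ∀ x lam, F x lam = f x - mulVecE (M x) lam)
    (h₁ : EuclideanSpace ℝ (Fin n) × EuclideanSpace ℝ (Fin p) → EuclideanSpace ℝ (Fin n))
    (H₁ : EuclideanSpace ℝ (Fin p) × EuclideanSpace ℝ (Fin p) → EuclideanSpace ℝ (Fin p))
    (hcomm : ∀ x lam, f (h₁ (x, lam)) = H₁ (F x lam, lam))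
    (hfLip : ∃ K : ℝ, 0 < K ∧ ∀ x x', ‖f x - f x'‖ ≤ K * ‖x - x'‖)
    (hgsLip : ∃ K : ℝ, 0 < K ∧ ∀ x x', ‖g (s x) - g (s x')‖ ≤ K * ‖x - x'‖)
    (hhbij : Function.Bijective
      (fun q : EuclideanSpace ℝ (Fin n) × EuclideanSpace ℝ (Fin p) => (h₁ q, q.2)))
    (hhbiLip : ∃ c C : ℝ, 0 < c ∧ 0 < C ∧
      ∀ q q' : EuclideanSpace ℝ (Fin n) × EuclideanSpace ℝ (Fin p),
        c * ‖q - q'‖ ≤ ‖(h₁ q, q.2) - (h₁ q', q'.2)‖ ∧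
        ‖(h₁ q, q.2) - (h₁ q', q'.2)‖ ≤ C * ‖q - q'‖)
    (hH₁bij : Function.Bijective (fun lam : EuclideanSpace ℝ (Fin p) => H₁ (0, lam)))
    (hH₁biLip : ∃ c C : ℝ, 0 < c ∧ 0 < C ∧
      ∀ lam lam' : EuclideanSpace ℝ (Fin p),
        c * ‖lam - lam'‖ ≤ ‖H₁ (0, lam) - H₁ (0, lam')‖ ∧
        ‖H₁ (0, lam) - H₁ (0, lam')‖ ≤ C * ‖lam - lam'‖) :
    ∃ c C : ℝ, 0 < c ∧ 0 < C ∧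
      ∀ x x' : EuclideanSpace ℝ (Fin n),
        c * ‖x - x'‖ ≤ ‖h₁ (x, g (s x)) - h₁ (x', g (s x'))‖ ∧
        ‖h₁ (x, g (s x)) - h₁ (x', g (s x'))‖ ≤ C * ‖x - x'‖ := by

  obtain ⟨Kf, hKf, hf⟩ := hfLip
  obtain ⟨Kg, hKg, hg⟩ := hgsLip
  obtain ⟨ch, Ch, hch, hCh, hh⟩ := hhbiLip
  obtain ⟨cH, CH, hcH, hCH, hH⟩ := hH₁biLip
  have key : ∀ x, f (h₁ (x, g (s x))) = H₁ (0, g (s x)) := by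
    intro x
    have hz : F x (g (s x)) = 0 := by rw [hF, ← hfg, sub_self]
    rw [← hz, hcomm]
  have hprod : ∀ (a a' : EuclideanSpace ℝ (Fin n)) (b b' : EuclideanSpace ℝ (Fin p)),
      ‖((a, b) : EuclideanSpace ℝ (Fin n) × EuclideanSpace ℝ (Fin p)) - (a', b')‖
        = max ‖a - a'‖ ‖b - b'‖ := by
    intro a a' b b'
    rw [Prod.mk_sub_mk, Prod.norm_def]
  refine ⟨ch * cH / (cH + Kf), Ch * (1 + Kg), by positivity, by positivity, ?_⟩
  intro x x'
  set A := ‖h₁ (x, g (s x)) - h₁ (x', g (s x'))‖ with hA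
  set B := ‖g (s x) - g (s x')‖ with hB
  have hA0 : (0:ℝ) ≤ A := norm_nonneg _
  have hB0 : (0:ℝ) ≤ B := norm_nonneg _
  have hBA : cH * B ≤ Kf * A := by
    have h1 := (hH (g (s x)) (g (s x'))).1
    rw [← key, ← key] at h1
    exact h1.trans (hf _ _)
  have hBx : B ≤ Kg * ‖x - x'‖ := hg x x'
  constructor
  · have h1 := (hh (x, g (s x)) (x', g (s x'))).1
    rw [hprod, hprod] at h1
    have h2 : ch * ‖x - x'‖ ≤ max A B :=
      le_trans (by
        have := le_max_left ‖x - x'‖ B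
        nlinarith) h1
    have h3 : cH * max A B ≤ (cH + Kf) * A := by
      rcases max_cases A B with ⟨he, _⟩ | ⟨he, _⟩ <;> rw [he] <;> nlinarith
    rw [div_mul_eq_mul_div, div_le_iff₀ (by positivity)]
    nlinarith
  · have h1 := (hh (x, g (s x)) (x', g (s x'))).2
    rw [hprod, hprod] at h1
    have h2 : A ≤ max A B := le_max_left _ _
    have h3 : max ‖x - x'‖ B ≤ (1 + Kg) * ‖x - x'‖ := by
      rcases max_cases ‖x - x'‖ B with ⟨he, _⟩ | ⟨he, _⟩ <;> rw [he] <;> nlinarith [norm_nonneg (x - x')]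
    nlinarith [norm_nonneg (x - x')]
end

section
/- Assume in addition that f, g, s, h₁, H₁ are continuous, that h(x,λ) = (h₁(x,λ), λ) is a homeomorphism of ℝ^n × ℝ^p, that H(y,λ) = (H₁(y,λ), λ) is a homeomorphism of ℝ^p × ℝ^p, and that λ ↦ H₁(0,λ) is a homeomorphism of ℝ^p. Then the map ℝ^n → ℝ^n given by x ↦ h₁(x, g(s(x))) is a homeomorphism of ℝ^n. (Global version of Lemma 4.1, the topological analogue of Lemma 3.3.) -/
lemma mulVecE_inj {p : ℕ} {A : Matrix (Fin p) (Fin p) ℝ} (hA : IsUnit A)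
    {u v : EuclideanSpace ℝ (Fin p)} (h : mulVecE A u = mulVecE A v) : u = v := by
  have := (WithLp.equiv 2 (Fin p → ℝ)).symm.injective h
  have := Matrix.mulVec_injective_iff_isUnit.mpr hA this
  exact (WithLp.equiv 2 (Fin p → ℝ)).injective this

/-- Lemma 4.1 (global version): if `f, g, s, h₁, H₁` are continuous,
`h(x,λ) = (h₁(x,λ),λ)` and `H(y,λ) = (H₁(y,λ),λ)` are homeomorphisms, and
`λ ↦ H₁(0,λ)` is a homeomorphism of `ℝ^p`, then `x ↦ h₁(x, g(s x))` is a
homeomorphism of `ℝ^n`. -/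
theorem lemma_4_1 (n p : ℕ) (hn : 0 < n) (hp : 0 < p)
    (f g : EuclideanSpace ℝ (Fin n) → EuclideanSpace ℝ (Fin p))
    (s : EuclideanSpace ℝ (Fin n) → EuclideanSpace ℝ (Fin n))
    (M : EuclideanSpace ℝ (Fin n) → Matrix (Fin p) (Fin p) ℝ)
    (hM : ∀ x, IsUnit (M x))
    (hfg : ∀ x, f x = mulVecE (M x) (g (s x)))
    (F : EuclideanSpace ℝ (Fin n) → EuclideanSpace ℝ (Fin p) → EuclideanSpace ℝ (Fin p))
    (hF : ∀ x lam, F x lam = f x - mulVecE (M x) lam)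
    (h₁ : EuclideanSpace ℝ (Fin n) × EuclideanSpace ℝ (Fin p) → EuclideanSpace ℝ (Fin n))
    (H₁ : EuclideanSpace ℝ (Fin p) × EuclideanSpace ℝ (Fin p) → EuclideanSpace ℝ (Fin p))
    (hcomm : ∀ x lam, f (h₁ (x, lam)) = H₁ (F x lam, lam))
    (hfc : Continuous f) (hgc : Continuous g) (hsc : Continuous s)
    (hh₁c : Continuous h₁) (hH₁c : Continuous H₁)
    (hh : ∃ e : (EuclideanSpace ℝ (Fin n) × EuclideanSpace ℝ (Fin p)) ≃ₜ
        (EuclideanSpace ℝ (Fin n) × EuclideanSpace ℝ (Fin p)),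
      ∀ q, e q = (h₁ q, q.2))
    (hH : ∃ e : (EuclideanSpace ℝ (Fin p) × EuclideanSpace ℝ (Fin p)) ≃ₜ
        (EuclideanSpace ℝ (Fin p) × EuclideanSpace ℝ (Fin p)),
      ∀ q, e q = (H₁ q, q.2))
    (hH₁ : ∃ e : EuclideanSpace ℝ (Fin p) ≃ₜ EuclideanSpace ℝ (Fin p),
      ∀ lam, e lam = H₁ (0, lam)) :
    ∃ e : EuclideanSpace ℝ (Fin n) ≃ₜ EuclideanSpace ℝ (Fin n),
      ∀ x, e x = h₁ (x, g (s x)) := by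
  obtain ⟨h, hhe⟩ := hh
  obtain ⟨H, hHe⟩ := hH
  obtain ⟨c, hce⟩ := hH₁
  -- F x (g (s x)) = 0
  have hF0 : ∀ x, F x (g (s x)) = 0 := by
    intro x; rw [hF, ← hfg, sub_self]
  -- f (h₁ (x, g (s x))) = c (g (s x))
  have key : ∀ x, f (h₁ (x, g (s x))) = c (g (s x)) := by
    intro x; rw [hcomm, hF0, hce]
  refine ⟨{
    toFun := fun x => h₁ (x, g (s x))
    invFun := fun y => (h.symm (y, c.symm (f y))).1
    left_inv := by
      intro x
      have h1 : c.symm (f (h₁ (x, g (s x)))) = g (s x) := by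
        rw [key]; exact c.symm_apply_apply _
      show (h.symm (h₁ (x, g (s x)), c.symm (f (h₁ (x, g (s x)))))).1 = x
      rw [h1]
      have h2 : h (x, g (s x)) = (h₁ (x, g (s x)), g (s x)) := hhe _
      rw [← h2, h.symm_apply_apply]
    right_inv := by
      intro y
      set lam := c.symm (f y) with hlam
      set q := h.symm (y, lam) with hq
      have hq1 : h q = (y, lam) := h.apply_symm_apply _
      have hq2 : (h₁ q, q.2) = (y, lam) := by rw [← hhe, hq1]
      have hq2' : q.2 = lam := congrArg Prod.snd hq2
      have hq3 : h₁ q = y := congrArg Prod.fst hq2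
      have hqe : q = (q.1, lam) := by rw [← hq2']
      have hfy : f y = H₁ (F q.1 lam, lam) := by
        rw [← hq3, hqe]; exact hcomm _ _
      have hfy' : f y = H₁ (0, lam) := by
        rw [← hce]; exact (c.apply_symm_apply _).symm
      have hHinj : (F q.1 lam, lam) = ((0 : EuclideanSpace ℝ (Fin p)), lam) := by
        apply H.injective
        rw [hHe, hHe]
        simp only [← hfy, ← hfy']
      have hF0' : F q.1 lam = 0 := congrArg Prod.fst hHinj
      have : mulVecE (M q.1) (g (s q.1)) = mulVecE (M q.1) lam := by
        have := hF q.1 lam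
        rw [hF0'] at this
        have h5 : f q.1 = mulVecE (M q.1) lam := sub_eq_zero.mp this.symm
        rw [← h5, hfg]
      have hg : g (s q.1) = lam := mulVecE_inj (hM q.1) this
      show h₁ (q.1, g (s q.1)) = y
      rw [hg, ← hqe, hq3]
    continuous_toFun := hh₁c.comp (continuous_id.prodMk (hgc.comp hsc))
    continuous_invFun := continuous_fst.comp
      (h.symm.continuous.comp (continuous_id.prodMk (c.symm.continuous.comp hfc)))
  }, fun x => rfl⟩
end

section
/- Let λ₀ ∈ ℝ^p, let Θ : ℝ^p × ℝ^p → ℝ^p be continuously differentiable on a neighborhood of (λ₀, φ(λ₀)), let φ : ℝ^p → ℝ^p be continuous at λ₀, and suppose Θ(λ, φ(λ)) = 0 for all λ in a neighborhood of λ₀. Let ψ₁, ψ₂ : (−ε, ε) → ℝ^p be differentiable at 0 with ψ₁(0) = ψ₂(0) = λ₀ and ψ₁'(0) ≠ ψ₂'(0). Then the limit as t → 0 (over t with ψ₂(t) ≠ ψ₁(t)) of ‖Θ(ψ₁(t), φ(ψ₂(t)))‖ / ‖ψ₂(t) − ψ₁(t)‖ exists and equals ‖D₁Θ(λ₀, φ(λ₀))·(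 (ψ₂'(0) − ψ₁'(0)) / ‖ψ₂'(0) − ψ₁'(0)‖ )‖, where D₁Θ denotes the partial derivative of Θ with respect to its first (λ) variable. (Equality (8) in the proof of Lemma 3.4.) -/
open Filter Asymptotics Topology

/-! Since `Θ(ψ₂(t), φ(ψ₂(t))) = 0` for small `t`, the numerator equals
`Θ(ψ₁(t), φ(ψ₂(t))) - Θ(ψ₂(t), φ(ψ₂(t)))`, and strict differentiability of `Θ` at
`(λ₀, φ(λ₀))` makes this `D₁Θ(ψ₁(t) - ψ₂(t)) + o(‖ψ₂(t) - ψ₁(t)‖)`. The remaining quotient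
`‖D₁Θ δ(t)‖ / ‖δ(t)‖` with `δ = ψ₂ - ψ₁` is unchanged when `δ(t)` is replaced by the slope
`δ(t) / t`, which tends to `v₂ - v₁ ≠ 0`. -/

section

variable {𝕜 α E F G : Type*} [NontriviallyNormedField 𝕜]
  [NormedAddCommGroup E] [NormedSpace 𝕜 E] [NormedAddCommGroup F] [NormedSpace 𝕜 F]
  [NormedAddCommGroup G] [NormedSpace 𝕜 G]

theorem HasStrictFDerivAt.isLittleO_sub_fst {f : E × F → G} {f' : E × F →L[𝕜] G} {z : E × F}
    (hf : HasStrictFDerivAt f f' z) {l : Filter α} {a b : α → E} {y : α → F}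
    (ha : Tendsto a l (𝓝 z.1)) (hb : Tendsto b l (𝓝 z.1)) (hy : Tendsto y l (𝓝 z.2)) :
    (fun t => f (a t, y t) - f (b t, y t) - f' (a t - b t, 0)) =o[l] fun t => a t - b t := by
  have hpairs : Tendsto (fun t => ((a t, y t), (b t, y t))) l (𝓝 (z, z)) :=
    (ha.prodMk_nhds hy).prodMk_nhds (hb.prodMk_nhds hy)
  have hdiff (t : α) : (a t, y t) - (b t, y t) = (a t - b t, 0) := by
    rw [Prod.mk_sub_mk, sub_self]
  have hlo := hf.isLittleO.comp_tendsto hpairs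
  simp only [Function.comp_def, hdiff] at hlo
  exact hlo.trans_isBigO (isBigO_of_le _ fun t => by simp [Prod.norm_def])

end

theorem tendsto_norm_div_norm_of_isLittleO {α E F : Type*} [NormedAddCommGroup E]
    [NormedAddCommGroup F] {l : Filter α} {g h : α → F} {δ : α → E} {c : ℝ}
    (hgh : (fun t => g t - h t) =o[l] δ) (hh : Tendsto (fun t => ‖h t‖ / ‖δ t‖) l (𝓝 c)) :
    Tendsto (fun t => ‖g t‖ / ‖δ t‖) l (𝓝 c) := by
  refine hh.congr_dist (squeeze_zero (fun t => dist_nonneg) (fun t => ?_)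
    hgh.norm_norm.tendsto_div_nhds_zero)
  rw [dist_comm, Real.dist_eq, div_sub_div_same, abs_div, abs_norm]
  gcongr
  exact abs_norm_sub_norm_le _ _

theorem HasDerivAt.tendsto_norm_map_div_norm {E F : Type*} [NormedAddCommGroup E]
    [NormedSpace ℝ E] [NormedAddCommGroup F] [NormedSpace ℝ F] {δ : ℝ → E} {w : E} {x : ℝ}
    (hδ : HasDerivAt δ w x) (hδx : δ x = 0) (hw : w ≠ 0) (A : E →L[ℝ] F) :
    Tendsto (fun t => ‖A (δ t)‖ / ‖δ t‖) (𝓝[≠] x) (𝓝 ‖A (‖w‖⁻¹ • w)‖) := by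
  have hslope : Tendsto (fun t => (t - x)⁻¹ • δ t) (𝓝[≠] x) (𝓝 w) :=
    (hasDerivAt_iff_tendsto_slope.mp hδ).congr fun t => by rw [slope_def_module, hδx, sub_zero]
  have hlim : ‖A (‖w‖⁻¹ • w)‖ = ‖A w‖ / ‖w‖ := by
    rw [map_smul, norm_smul, norm_inv, norm_norm, inv_mul_eq_div]
  rw [hlim]
  have hquot := ((A.continuous.tendsto w).comp hslope).norm.div hslope.norm (norm_ne_zero_iff.2 hw)
  refine hquot.congr' ?_
  filter_upwards [self_mem_nhdsWithin] with t (ht : t ≠ x)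
  have hscale : ‖(t - x)⁻¹‖ ≠ 0 := norm_ne_zero_iff.2 (inv_ne_zero (sub_ne_zero.2 ht))
  simp only [Pi.div_apply, Function.comp_apply, map_smul, norm_smul,
    mul_div_mul_left _ _ hscale]

theorem equality_8_general (p : ℕ)
    (Θ : EuclideanSpace ℝ (Fin p) × EuclideanSpace ℝ (Fin p) → EuclideanSpace ℝ (Fin p))
    (φ : EuclideanSpace ℝ (Fin p) → EuclideanSpace ℝ (Fin p))
    (lam₀ : EuclideanSpace ℝ (Fin p))
    (hΘC1 : ∀ᶠ z in nhds (lam₀, φ lam₀), ContDiffAt ℝ 1 Θ z)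
    (hφc : ContinuousAt φ lam₀)
    (hzero : ∀ᶠ lam in nhds lam₀, Θ (lam, φ lam) = 0)
    (ψ₁ ψ₂ : ℝ → EuclideanSpace ℝ (Fin p))
    (v₁ v₂ : EuclideanSpace ℝ (Fin p))
    (hψ₁0 : ψ₁ 0 = lam₀) (hψ₂0 : ψ₂ 0 = lam₀)
    (hψ₁ : HasDerivAt ψ₁ v₁ 0) (hψ₂ : HasDerivAt ψ₂ v₂ 0)
    (hne : v₁ ≠ v₂) :
    Tendsto (fun t : ℝ => ‖Θ (ψ₁ t, φ (ψ₂ t))‖ / ‖ψ₂ t - ψ₁ t‖)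
      (nhdsWithin 0 {t : ℝ | ψ₂ t ≠ ψ₁ t})
      (nhds ‖(fderiv ℝ (fun lam => Θ (lam, φ lam₀)) lam₀)
        ((‖v₂ - v₁‖)⁻¹ • (v₂ - v₁))‖) := by
  set l := 𝓝[{t : ℝ | ψ₂ t ≠ ψ₁ t}] 0
  have hΘ := hΘC1.self_of_nhds.hasStrictFDerivAt one_ne_zero
  set A := (fderiv ℝ Θ (lam₀, φ lam₀)).comp (ContinuousLinearMap.inl ℝ _ _)
  have hpartial : HasFDerivAt (fun lam => Θ (lam, φ lam₀)) A lam₀ :=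
    hΘ.hasFDerivAt.comp lam₀ (hasFDerivAt_prodMk_left lam₀ (φ lam₀))
  rw [hpartial.fderiv]
  have hψ₁t : Tendsto ψ₁ l (𝓝 lam₀) :=
    hψ₁0 ▸ hψ₁.continuousAt.tendsto.mono_left nhdsWithin_le_nhds
  have hψ₂t : Tendsto ψ₂ l (𝓝 lam₀) :=
    hψ₂0 ▸ hψ₂.continuousAt.tendsto.mono_left nhdsWithin_le_nhds
  have hvanish : ∀ᶠ t in l, Θ (ψ₂ t, φ (ψ₂ t)) = 0 := hψ₂t.eventually hzero
  have hlo : (fun t => Θ (ψ₁ t, φ (ψ₂ t)) - A (ψ₁ t - ψ₂ t)) =o[l] fun t => ψ₂ t - ψ₁ t :=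
    ((hΘ.isLittleO_sub_fst hψ₁t hψ₂t (hφc.tendsto.comp hψ₂t)).congr'
      (hvanish.mono fun t ht => by simp [ht, A]) EventuallyEq.rfl).trans_isBigO
      (isBigO_of_le _ fun t => (norm_sub_rev _ _).le)
  have hl : l ≤ 𝓝[≠] 0 := nhdsWithin_mono _ fun t ht h0 => ht (by simp_all)
  have hdir := ((hψ₂.sub hψ₁).tendsto_norm_map_div_norm (by simp [hψ₁0, hψ₂0])
    (sub_ne_zero.2 hne.symm) A).mono_left hl
  refine tendsto_norm_div_norm_of_isLittleO hlo ?_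
  simpa only [Pi.sub_apply, ← neg_sub (ψ₂ _), map_neg, norm_neg] using hdir

/-- Equality (8) in the proof of Lemma 3.4: if `Θ(λ, φ(λ)) = 0` near `λ₀`,
`Θ` is `C¹` near `(λ₀, φ(λ₀))`, `φ` is continuous at `λ₀`, and `ψ₁, ψ₂` are
curves through `λ₀` with distinct velocities at `0`, then
`‖Θ(ψ₁(t), φ(ψ₂(t)))‖ / ‖ψ₂(t) − ψ₁(t)‖` tends, as `t → 0` over the set where
`ψ₂(t) ≠ ψ₁(t)`, to `‖D₁Θ(λ₀, φ(λ₀))((ψ₂'(0) − ψ₁'(0))/‖ψ₂'(0) − ψ₁'(0)‖)‖`,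
where `D₁Θ` is the partial derivative of `Θ` in its first variable. -/
theorem equality_8 (p : ℕ) (hp : 0 < p)
    (Θ : EuclideanSpace ℝ (Fin p) × EuclideanSpace ℝ (Fin p) → EuclideanSpace ℝ (Fin p))
    (φ : EuclideanSpace ℝ (Fin p) → EuclideanSpace ℝ (Fin p))
    (lam₀ : EuclideanSpace ℝ (Fin p))
    (hΘC1 : ∀ᶠ z in nhds (lam₀, φ lam₀), ContDiffAt ℝ 1 Θ z)
    (hφc : ContinuousAt φ lam₀)
    (hzero : ∀ᶠ lam in nhds lam₀, Θ (lam, φ lam) = 0)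
    (ψ₁ ψ₂ : ℝ → EuclideanSpace ℝ (Fin p))
    (v₁ v₂ : EuclideanSpace ℝ (Fin p))
    (hψ₁0 : ψ₁ 0 = lam₀) (hψ₂0 : ψ₂ 0 = lam₀)
    (hψ₁ : HasDerivAt ψ₁ v₁ 0) (hψ₂ : HasDerivAt ψ₂ v₂ 0)
    (hne : v₁ ≠ v₂) :
    Tendsto (fun t : ℝ => ‖Θ (ψ₁ t, φ (ψ₂ t))‖ / ‖ψ₂ t - ψ₁ t‖)
      (nhdsWithin 0 {t : ℝ | ψ₂ t ≠ ψ₁ t})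
      (nhds ‖(fderiv ℝ (fun lam => Θ (lam, φ lam₀)) lam₀)
        ((‖v₂ - v₁‖)⁻¹ • (v₂ - v₁))‖) :=
  equality_8_general p Θ φ lam₀ hΘC1 hφc hzero ψ₁ ψ₂ v₁ v₂ hψ₁0 hψ₂0 hψ₁ hψ₂ hne
end

section
/- Let Θ : ℝ^p × ℝ^p → ℝ^p be continuously differentiable on a neighborhood of (0,0) with Θ(0,0) = 0, and let φ : ℝ^p → ℝ^p be continuous at 0 with φ(0) = 0 and Θ(λ, φ(λ)) = 0 for all λ in a neighborhood of 0. Suppose there is K > 0 such that ‖Θ(λ,y) − Θ(λ,ỹ)‖ ≤ K‖y − ỹ‖ for all λ, y, ỹ in a neighborhood of 0, and suppose the partial derivative D₁Θ(0,0) of Θ in the first variable at (0,0) is an invertible linear map of ℝ^p. Then there exist C > 0 and δ > 0 such that ‖λ − λ̃‖ ≤ C‖φ(λ) − φ(λ̃)‖ for all λ, λ̃ with ‖λ‖ < δ and ‖λ̃‖ < δ. In particular, if φ is moreover Lipschitz on a neighborhood of 0, then φ is bi-Lipschitz on a neighborhood of 0. (The analytic core of Lemma 3.4: the map λ ↦ H₁(0,λ)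 has a Lipschitz inverse.) -/
open Filter Topology NNReal

/-!
Write `D = DΘ(0,0)` and `A = D₁Θ(0,0)`, so that `m‖u‖ ≤ ‖A u‖` for some `m > 0`. Strict
differentiability of `Θ` at the origin makes `D` approximate `Θ` on a neighbourhood `s` with
constant `m / 2`. For two points `(λ, φ λ)`, `(λ̃, φ λ̃)` of the zero set inside `s`, the vector
`(u, v) = (λ - λ̃, φ λ - φ λ̃)` therefore satisfies `‖D (u, v)‖ ≤ (m / 2) ‖(u, v)‖`, and splitting
`D (u, v) = A u + D (0, v)` gives `(m / 2) ‖u‖ ≤ (m / 2 + ‖D‖) ‖v‖`.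
-/

section

variable {𝕜 E F G : Type*} [NontriviallyNormedField 𝕜]
  [NormedAddCommGroup E] [NormedSpace 𝕜 E] [NormedAddCommGroup F] [NormedSpace 𝕜 F]
  [NormedAddCommGroup G] [NormedSpace 𝕜 G]

theorem ApproximatesLinearOn.mul_norm_sub_fst_le {f : E × F → G} {D : E × F →L[𝕜] G}
    {s : Set (E × F)} {c : ℝ≥0} {m : ℝ} (hf : ApproximatesLinearOn f D s c)
    (hm : ∀ u, m * ‖u‖ ≤ ‖D (u, 0)‖) {z z' : E × F} (hz : z ∈ s) (hz' : z' ∈ s)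
    (heq : f z = f z') :
    (m - c) * ‖z.1 - z'.1‖ ≤ (c + ‖D‖) * ‖z.2 - z'.2‖ := by
  set u := z.1 - z'.1
  set v := z.2 - z'.2
  have happrox : ‖D (u, v)‖ ≤ c * (‖u‖ + ‖v‖) := by
    have h := hf z hz z' hz'
    rw [heq, sub_self, zero_sub, norm_neg] at h
    exact h.trans (mul_le_mul_of_nonneg_left (max_le_add_of_nonneg (norm_nonneg u)
      (norm_nonneg v)) c.coe_nonneg)
  have hsplit : D (u, v) = D (u, 0) + D (0, v) := by
    rw [← map_add, Prod.mk_add_mk, add_zero, zero_add]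
  have hsecond : ‖D (0, v)‖ ≤ ‖D‖ * ‖v‖ := by
    simpa using D.le_opNorm (0, v)
  have hbound : m * ‖u‖ ≤ c * (‖u‖ + ‖v‖) + ‖D‖ * ‖v‖ :=
    calc m * ‖u‖ ≤ ‖D (u, 0)‖ := hm u
      _ = ‖D (u, v) - D (0, v)‖ := by rw [hsplit, add_sub_cancel_right]
      _ ≤ ‖D (u, v)‖ + ‖D (0, v)‖ := norm_sub_le _ _
      _ ≤ c * (‖u‖ + ‖v‖) + ‖D‖ * ‖v‖ := add_le_add happrox hsecond
  linarith

theorem HasStrictFDerivAt.exists_norm_sub_fst_le {f : E × F → G} {D : E × F →L[𝕜] G}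
    {p : E × F} {m : ℝ} (hf : HasStrictFDerivAt f D p) (hm0 : 0 < m)
    (hm : ∀ u, m * ‖u‖ ≤ ‖D (u, 0)‖) :
    ∃ C > 0, ∃ s ∈ 𝓝 p, ∀ z ∈ s, ∀ z' ∈ s, f z = f z' →
      ‖z.1 - z'.1‖ ≤ C * ‖z.2 - z'.2‖ := by
  set c : ℝ≥0 := ⟨m / 2, by positivity⟩
  have hc : (c : ℝ) = m / 2 := rfl
  obtain ⟨s, hs, happrox⟩ :=
    hf.approximates_deriv_on_nhds (c := c) (Or.inr (NNReal.coe_pos.1 (by rw [hc]; positivity)))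
  have hmc : 0 < m - c := by linarith
  refine ⟨(c + ‖D‖) / (m - c), div_pos (by rw [hc]; positivity) hmc, s, hs,
    fun z hz z' hz' heq => ?_⟩
  rw [div_mul_eq_mul_div, le_div_iff₀ hmc, mul_comm]
  exact happrox.mul_norm_sub_fst_le hm hz hz' heq

theorem HasStrictFDerivAt.exists_norm_sub_le_of_graph {f : E × F → G} {D : E × F →L[𝕜] G}
    {φ : E → F} {a : E} {b : F} {y : G} {m : ℝ} (hf : HasStrictFDerivAt f D (a, b)) (hm0 : 0 < m)
    (hm : ∀ u, m * ‖u‖ ≤ ‖D (u, 0)‖) (hφ : Tendsto φ (𝓝 a) (𝓝 b))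
    (hlevel : ∀ᶠ x in 𝓝 a, f (x, φ x) = y) :
    ∃ C > 0, ∃ t ∈ 𝓝 a, ∀ x ∈ t, ∀ x' ∈ t, ‖x - x'‖ ≤ C * ‖φ x - φ x'‖ := by
  obtain ⟨C, hC, s, hs, hCs⟩ := hf.exists_norm_sub_fst_le hm0 hm
  have hgraph : ∀ᶠ x in 𝓝 a, (x, φ x) ∈ s := tendsto_id.prodMk_nhds hφ hs
  refine ⟨C, hC, _, hgraph.and hlevel, fun x hx x' hx' => ?_⟩
  exact hCs _ hx.1 _ hx'.1 (hx.2.trans hx'.2.symm)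

end

theorem ContinuousLinearMap.exists_pos_mul_norm_le_of_injective {𝕜 E F : Type*}
    [NontriviallyNormedField 𝕜] [CompleteSpace 𝕜] [NormedAddCommGroup E] [NormedSpace 𝕜 E]
    [FiniteDimensional 𝕜 E] [NormedAddCommGroup F] [NormedSpace 𝕜 F] {A : E →L[𝕜] F}
    (hA : Function.Injective A) : ∃ m > 0, ∀ u, m * ‖u‖ ≤ ‖A u‖ := by
  obtain ⟨K, -, hK⟩ := (A : E →ₗ[𝕜] F).injective_iff_antilipschitz.1 hA
  exact antilipschitzWith_iff_exists_mul_le_norm.1 ⟨K, hK⟩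

theorem bilipschitz_of_norm_sub_le {E F : Type*} [SeminormedAddCommGroup E]
    [SeminormedAddCommGroup F] {φ : E → F} {C δ : ℝ} (hC : 0 < C) (hδ : 0 < δ)
    (hinv : ∀ a b : E, ‖a‖ < δ → ‖b‖ < δ → ‖a - b‖ ≤ C * ‖φ a - φ b‖) :
    ∀ Kφ δ₁ : ℝ, 0 < Kφ → 0 < δ₁ →
      (∀ a b : E, ‖a‖ < δ₁ → ‖b‖ < δ₁ → ‖φ a - φ b‖ ≤ Kφ * ‖a - b‖) →
      ∃ c C δ₂ : ℝ, 0 < c ∧ 0 < C ∧ 0 < δ₂ ∧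
        ∀ a b : E, ‖a‖ < δ₂ → ‖b‖ < δ₂ →
          c * ‖a - b‖ ≤ ‖φ a - φ b‖ ∧ ‖φ a - φ b‖ ≤ C * ‖a - b‖ := by
  intro Kφ δ₁ hKφ hδ₁ hlip
  refine ⟨C⁻¹, Kφ, min δ δ₁, inv_pos.2 hC, hKφ, lt_min hδ hδ₁, fun a b ha hb => ?_⟩
  rw [lt_min_iff] at ha hb
  refine ⟨?_, hlip a b ha.2 hb.2⟩
  rw [inv_mul_le_iff₀ hC]
  exact hinv a b ha.1 hb.1

theorem lipschitz_inverse_general (p : ℕ)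
    (Θ : EuclideanSpace ℝ (Fin p) × EuclideanSpace ℝ (Fin p) → EuclideanSpace ℝ (Fin p))
    (φ : EuclideanSpace ℝ (Fin p) → EuclideanSpace ℝ (Fin p))
    (hΘC1 : ∀ᶠ z in nhds ((0, 0) : EuclideanSpace ℝ (Fin p) × EuclideanSpace ℝ (Fin p)),
      ContDiffAt ℝ 1 Θ z)
    (hφc : ContinuousAt φ 0) (hφ0 : φ 0 = 0)
    (hzero : ∀ᶠ lam in nhds (0 : EuclideanSpace ℝ (Fin p)), Θ (lam, φ lam) = 0)
    (hD₁ : Function.Bijective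
      (fderiv ℝ (fun lam : EuclideanSpace ℝ (Fin p) => Θ (lam, 0)) 0)) :
    (∃ C δ : ℝ, 0 < C ∧ 0 < δ ∧
      ∀ lam lam' : EuclideanSpace ℝ (Fin p), ‖lam‖ < δ → ‖lam'‖ < δ →
        ‖lam - lam'‖ ≤ C * ‖φ lam - φ lam'‖) ∧
    (∀ Kφ δ₁ : ℝ, 0 < Kφ → 0 < δ₁ →
      (∀ a b : EuclideanSpace ℝ (Fin p), ‖a‖ < δ₁ → ‖b‖ < δ₁ →
        ‖φ a - φ b‖ ≤ Kφ * ‖a - b‖) →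
      ∃ c C δ₂ : ℝ, 0 < c ∧ 0 < C ∧ 0 < δ₂ ∧
        ∀ a b : EuclideanSpace ℝ (Fin p), ‖a‖ < δ₂ → ‖b‖ < δ₂ →
          c * ‖a - b‖ ≤ ‖φ a - φ b‖ ∧ ‖φ a - φ b‖ ≤ C * ‖a - b‖) := by
  have hΘ : HasStrictFDerivAt Θ (fderiv ℝ Θ (0, 0)) (0, 0) :=
    hΘC1.self_of_nhds.hasStrictFDerivAt one_ne_zero
  have hpartial : fderiv ℝ (fun lam => Θ (lam, 0)) 0 = (fderiv ℝ Θ (0, 0)).comp (.inl ℝ _ _) :=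
    (hΘ.hasFDerivAt.comp (f := fun lam => (lam, 0)) 0 (hasFDerivAt_prodMk_left _ _)).fderiv
  obtain ⟨m, hm0, hm⟩ :=
    ContinuousLinearMap.exists_pos_mul_norm_le_of_injective (hpartial ▸ hD₁.injective)
  obtain ⟨C, hC, t, ht, hCt⟩ :=
    hΘ.exists_norm_sub_le_of_graph hm0 hm (hφc.tendsto.trans_eq (congrArg 𝓝 hφ0)) hzero
  obtain ⟨δ, hδ, hball⟩ := Metric.mem_nhds_iff.1 ht
  have hinv : ∀ lam lam' : EuclideanSpace ℝ (Fin p), ‖lam‖ < δ → ‖lam'‖ < δ →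
      ‖lam - lam'‖ ≤ C * ‖φ lam - φ lam'‖ := fun lam lam' hlam hlam' =>
    hCt _ (hball (mem_ball_zero_iff.2 hlam)) _ (hball (mem_ball_zero_iff.2 hlam'))
  exact ⟨⟨C, δ, hC, hδ, hinv⟩, bilipschitz_of_norm_sub_le hC hδ hinv⟩

/-- The analytic core of Lemma 3.4: if `Θ` is `C¹` near the origin with
`Θ(0,0) = 0`, `φ` is continuous at `0` with `φ(0) = 0` and `Θ(λ, φ(λ)) = 0`
near `0`, `Θ` is `K`-Lipschitz in its second variable near `0`, and the
partial derivative `D₁Θ(0,0)` in the first variable is invertible, then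
`‖λ − λ̃‖ ≤ C‖φ(λ) − φ(λ̃)‖` near `0`; in particular, if `φ` is moreover
Lipschitz near `0`, then `φ` is bi-Lipschitz near `0`. -/
theorem lipschitz_inverse (p : ℕ) (hp : 0 < p)
    (Θ : EuclideanSpace ℝ (Fin p) × EuclideanSpace ℝ (Fin p) → EuclideanSpace ℝ (Fin p))
    (φ : EuclideanSpace ℝ (Fin p) → EuclideanSpace ℝ (Fin p))
    (hΘC1 : ∀ᶠ z in nhds ((0, 0) : EuclideanSpace ℝ (Fin p) × EuclideanSpace ℝ (Fin p)),
      ContDiffAt ℝ 1 Θ z)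
    (hΘ0 : Θ (0, 0) = 0)
    (hφc : ContinuousAt φ 0) (hφ0 : φ 0 = 0)
    (hzero : ∀ᶠ lam in nhds (0 : EuclideanSpace ℝ (Fin p)), Θ (lam, φ lam) = 0)
    (hLip : ∃ K δ₀ : ℝ, 0 < K ∧ 0 < δ₀ ∧
      ∀ lam y y2 : EuclideanSpace ℝ (Fin p), ‖lam‖ < δ₀ → ‖y‖ < δ₀ → ‖y2‖ < δ₀ →
        ‖Θ (lam, y) - Θ (lam, y2)‖ ≤ K * ‖y - y2‖)
    (hD₁ : Function.Bijective
      (fderiv ℝ (fun lam : EuclideanSpace ℝ (Fin p) => Θ (lam, 0)) 0)) :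
    (∃ C δ : ℝ, 0 < C ∧ 0 < δ ∧
      ∀ lam lam' : EuclideanSpace ℝ (Fin p), ‖lam‖ < δ → ‖lam'‖ < δ →
        ‖lam - lam'‖ ≤ C * ‖φ lam - φ lam'‖) ∧
    (∀ Kφ δ₁ : ℝ, 0 < Kφ → 0 < δ₁ →
      (∀ a b : EuclideanSpace ℝ (Fin p), ‖a‖ < δ₁ → ‖b‖ < δ₁ →
        ‖φ a - φ b‖ ≤ Kφ * ‖a - b‖) →
      ∃ c C δ₂ : ℝ, 0 < c ∧ 0 < C ∧ 0 < δ₂ ∧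
        ∀ a b : EuclideanSpace ℝ (Fin p), ‖a‖ < δ₂ → ‖b‖ < δ₂ →
          c * ‖a - b‖ ≤ ‖φ a - φ b‖ ∧ ‖φ a - φ b‖ ≤ C * ‖a - b‖) :=
  lipschitz_inverse_general p Θ φ hΘC1 hφc hφ0 hzero hD₁
end

section
/- Define f, g : ℝ² → ℝ² by f(x,y) = (x, y³ + xy) and g(x,y) = (x, y³). Then f and g are not bi-Lipschitz 𝒜-equivalent: there do not exist open neighborhoods U, V of the origin in ℝ² and maps σ : U → ℝ², τ : V → ℝ² with σ(0) = 0, τ(0) = 0, σ and τ injective and bi-Lipschitz onto their (open) images, such that g(σ(x,y)) ∈ V and f(x,y) = τ(g(σ(x,y))) for all (x,y) ∈ U. (Second claim of Remark 1, showing the rank-zero hypothesis in Theorem 2 is essential.) -/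
/-!
Since `y ↦ y³` is injective, so is `g`, hence `f = τ ∘ g ∘ σ` would be injective near
the origin. But `f` folds every neighbourhood of the origin: `(-t², t)` and `(-t², -t)`
both map to `(-t², 0)`.
-/

open Filter Topology

theorem injective_of_apply_eq_cube {g : EuclideanSpace ℝ (Fin 2) → EuclideanSpace ℝ (Fin 2)}
    (hg : ∀ v : EuclideanSpace ℝ (Fin 2),
      g v = (WithLp.equiv 2 (Fin 2 → ℝ)).symm ![v 0, (v 1) ^ 3]) :
    Function.Injective g := by
  intro v w hvw
  rw [hg v, hg w] at hvw
  have h0 : v 0 = w 0 := by simpa using congrArg (· 0) hvw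
  have h1 : v 1 ^ 3 = w 1 ^ 3 := by simpa using congrArg (· 1) hvw
  have h1' : v 1 = w 1 := (Odd.strictMono_pow (by decide : Odd 3)).injective h1
  ext i
  fin_cases i <;> assumption

theorem not_injOn_of_apply_eq_fold {f : EuclideanSpace ℝ (Fin 2) → EuclideanSpace ℝ (Fin 2)}
    (hf : ∀ v : EuclideanSpace ℝ (Fin 2),
      f v = (WithLp.equiv 2 (Fin 2 → ℝ)).symm ![v 0, (v 1) ^ 3 + v 0 * v 1])
    {U : Set (EuclideanSpace ℝ (Fin 2))} (hU : U ∈ 𝓝 0) :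
    ¬ Set.InjOn f U := by
  set p : ℝ → EuclideanSpace ℝ (Fin 2) := fun t =>
    (WithLp.equiv 2 (Fin 2 → ℝ)).symm ![-t ^ 2, t]
  have hp0 : p 0 = 0 := by
    ext i
    fin_cases i <;> simp [p]
  have hp : Tendsto p (𝓝 0) (𝓝 0) :=
    hp0 ▸ ((PiLp.continuous_toLp 2 _).comp (by fun_prop) : Continuous p).tendsto 0
  have hpneg : Tendsto (fun t => p (-t)) (𝓝 0) (𝓝 0) :=
    hp.comp (continuous_neg.tendsto' 0 0 neg_zero)
  have hpU : ∀ᶠ t in 𝓝[>] (0 : ℝ), p t ∈ U ∧ p (-t) ∈ U :=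
    nhdsWithin_le_nhds <| (hp.eventually_mem hU).and (hpneg.eventually_mem hU)
  obtain ⟨t, ⟨htU, hntU⟩, ht⟩ := (hpU.and self_mem_nhdsWithin).exists
  intro hinj
  have hfp : ∀ s, f (p s) = (WithLp.equiv 2 (Fin 2 → ℝ)).symm ![-s ^ 2, 0] := fun s => by
    rw [hf]
    simp [p]
    ring
  have hf_eq : f (p t) = f (p (-t)) := by rw [hfp, hfp, neg_sq]
  have ht_eq : t = -t := by simpa [p] using congrArg (· 1) (hinj htU hntU hf_eq)
  linarith [show (0 : ℝ) < t from ht]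

/-- Second claim of Remark 1: `f(x,y) = (x, y³ + xy)` and `g(x,y) = (x, y³)`
are not bi-Lipschitz 𝒜-equivalent as germs at the origin: there do not exist
open neighborhoods `U, V` of the origin of `ℝ²` and origin-preserving maps
`σ : U → ℝ²`, `τ : V → ℝ²`, injective and bi-Lipschitz onto their open images,
with `g(σ(z)) ∈ V` and `f(z) = τ(g(σ(z)))` for all `z ∈ U`. -/
theorem remark_1_not_biLipschitz_A_equivalent
    (f g : EuclideanSpace ℝ (Fin 2) → EuclideanSpace ℝ (Fin 2))
    (hf : ∀ v : EuclideanSpace ℝ (Fin 2),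
      f v = (WithLp.equiv 2 (Fin 2 → ℝ)).symm ![v 0, (v 1) ^ 3 + v 0 * v 1])
    (hg : ∀ v : EuclideanSpace ℝ (Fin 2),
      g v = (WithLp.equiv 2 (Fin 2 → ℝ)).symm ![v 0, (v 1) ^ 3]) :
    ¬ ∃ (U V : Set (EuclideanSpace ℝ (Fin 2)))
        (σ τ : EuclideanSpace ℝ (Fin 2) → EuclideanSpace ℝ (Fin 2)),
      IsOpen U ∧ (0 : EuclideanSpace ℝ (Fin 2)) ∈ U ∧
      IsOpen V ∧ (0 : EuclideanSpace ℝ (Fin 2)) ∈ V ∧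
      σ 0 = 0 ∧ τ 0 = 0 ∧
      Set.InjOn σ U ∧ Set.InjOn τ V ∧
      IsOpen (σ '' U) ∧ IsOpen (τ '' V) ∧
      (∃ c C : ℝ, 0 < c ∧ 0 < C ∧ ∀ a ∈ U, ∀ b ∈ U,
        c * ‖a - b‖ ≤ ‖σ a - σ b‖ ∧ ‖σ a - σ b‖ ≤ C * ‖a - b‖) ∧
      (∃ c C : ℝ, 0 < c ∧ 0 < C ∧ ∀ a ∈ V, ∀ b ∈ V,
        c * ‖a - b‖ ≤ ‖τ a - τ b‖ ∧ ‖τ a - τ b‖ ≤ C * ‖a - b‖) ∧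
      (∀ z ∈ U, g (σ z) ∈ V) ∧
      (∀ z ∈ U, f z = τ (g (σ z))) := by
  rintro ⟨U, V, σ, τ, hU, hU0, -, -, -, -, hσ, hτ, -, -, -, -, hmaps, hfactor⟩
  have hgσ : Set.InjOn (g ∘ σ) U := (injective_of_apply_eq_cube hg).comp_injOn hσ
  have hτgσ : Set.InjOn (τ ∘ g ∘ σ) U := hτ.comp hgσ hmaps
  exact not_injOn_of_apply_eq_fold hf (hU.mem_nhds hU0) <|
    hτgσ.congr fun z hz => (hfactor z hz).symm
end
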